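/- arXiv:2503.06607 — 6 statements merged into one kernel-verified Lean document; each statement's English description precedes it below -/
import Mathlib

section
/- Let A = [[-d, b],[(1-d²)/b, d]] and B = [[-t, y],[(1-t²)/y, t]] with b, y ∈ ℂ*. Then A and B have a common eigenvector in ℂ² if and only if b(t+1) = y(d+1), or b(t-1) = y(d-1), or b(t+1) = y(d-1), or b(t-1) = y(d+1). Equivalently, the representation λ₁ of FVB₂ sending σ₁ ↦ A, ρ₁ ↦ B is irreducible if and only if b(t±1) ≠ y(d±1) for all four sign combinations. -/
/-- The matrices `A = [[-d,b],[(1-d²)/b,d]]` and `B = [[-t,y],[(1-t²)/y,t]]`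
(with `b, y ≠ 0`) have a common eigenvector iff `b(t±1) = y(d±1)` for one of the
four sign combinations; i.e. the representation λ₁ of `FVB₂` is irreducible iff
`b(t±1) ≠ y(d±1)` for all four sign combinations. -/
theorem stmt2 (b d y t : ℂ) (hb : b ≠ 0) (hy : y ≠ 0)
    (A B : Matrix (Fin 2) (Fin 2) ℂ)
    (hA : A = !![-d, b; (1 - d ^ 2) / b, d])
    (hB : B = !![-t, y; (1 - t ^ 2) / y, t]) :
    (∃ v : Fin 2 → ℂ, v ≠ 0 ∧ (∃ μ : ℂ, A.mulVec v = μ • v) ∧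
        (∃ ν : ℂ, B.mulVec v = ν • v)) ↔
      (b * (t + 1) = y * (d + 1) ∨ b * (t - 1) = y * (d - 1) ∨
        b * (t + 1) = y * (d - 1) ∨ b * (t - 1) = y * (d + 1)) := by
  subst hA hB
  constructor
  · rintro ⟨v, hv, ⟨μ, hμ⟩, ⟨ν, hν⟩⟩
    have h0 := congrFun hμ 0
    have h1 := congrFun hμ 1
    have h2 := congrFun hν 0
    have h3 := congrFun hν 1
    simp [Matrix.mulVec, dotProduct, Fin.sum_univ_two] at h0 h1 h2 h3
    have hv0 : v 0 ≠ 0 := by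
      intro h
      apply hv
      have hb1 : b * v 1 = 0 := by rw [h] at h0; linear_combination h0
      have h1' : v 1 = 0 := (mul_eq_zero.mp hb1).resolve_left hb
      funext i; fin_cases i <;> simp_all
    rw [div_mul_eq_mul_div, div_add' _ _ _ hb, div_eq_iff hb] at h1
    rw [div_mul_eq_mul_div, div_add' _ _ _ hy, div_eq_iff hy] at h3
    have eA : (b * v 1 - (d + 1) * v 0) * (b * v 1 - (d - 1) * v 0) = 0 := by
      linear_combination (b * v 1) * h0 - v 0 * h1
    have eB : (y * v 1 - (t + 1) * v 0) * (y * v 1 - (t - 1) * v 0) = 0 := by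
      linear_combination (y * v 1) * h2 - v 0 * h3
    rcases mul_eq_zero.mp eA with hA | hA <;> rcases mul_eq_zero.mp eB with hB | hB <;>
        rw [sub_eq_zero] at hA hB
    · exact Or.inl (mul_right_cancel₀ hv0 (by linear_combination y * hA - b * hB))
    · exact Or.inr (Or.inr (Or.inr (mul_right_cancel₀ hv0
        (by linear_combination y * hA - b * hB))))
    · exact Or.inr (Or.inr (Or.inl (mul_right_cancel₀ hv0
        (by linear_combination y * hA - b * hB))))
    · exact Or.inr (Or.inl (mul_right_cancel₀ hv0 (by linear_combination y * hA - b * hB)))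
  · have key : ∀ ε : ℂ, ε = 1 ∨ ε = -1 → ∀ δ : ℂ, δ = 1 ∨ δ = -1 →
        b * (t + δ) = y * (d + ε) →
        ∃ v : Fin 2 → ℂ, v ≠ 0 ∧
          (∃ μ : ℂ, (!![-d, b; (1 - d ^ 2) / b, d]).mulVec v = μ • v) ∧
          (∃ ν : ℂ, (!![-t, y; (1 - t ^ 2) / y, t]).mulVec v = ν • v) := by
      intro ε hε δ hδ h
      have hε2 : ε ^ 2 = 1 := by rcases hε with h' | h' <;> simp [h']
      have hδ2 : δ ^ 2 = 1 := by rcases hδ with h' | h' <;> simp [h']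
      refine ⟨![b, d + ε], ?_, ⟨ε, ?_⟩, ⟨δ, ?_⟩⟩
      · intro h'
        exact hb (by simpa using congrFun h' 0)
      · funext i; fin_cases i
        · simp [Matrix.mulVec, dotProduct, Fin.sum_univ_two]; ring
        · simp [Matrix.mulVec, dotProduct, Fin.sum_univ_two]
          field_simp
          linear_combination -hε2
      · funext i; fin_cases i
        · simp [Matrix.mulVec, dotProduct, Fin.sum_univ_two]
          linear_combination -h
        · simp [Matrix.mulVec, dotProduct, Fin.sum_univ_two]
          field_simp
          linear_combination -(t - δ) * h - b * hδ2
    rintro (h | h | h | h)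
    · exact key 1 (Or.inl rfl) 1 (Or.inl rfl) h
    · exact key (-1) (Or.inr rfl) (-1) (Or.inr rfl) (by linear_combination h)
    · exact key (-1) (Or.inr rfl) 1 (Or.inl rfl) h
    · exact key 1 (Or.inl rfl) (-1) (Or.inr rfl) (by linear_combination h)
end

section
/- Let A = [[1,0],[c,-1]] and B = [[-t, y],[(1-t²)/y, t]] with y ∈ ℂ*. Then A and B have a common eigenvector in ℂ² if and only if yc = 2(t+1) or yc = 2(t-1) or t = 1 or t = -1 with the corresponding eigenvector matching; in particular, the representation λ₂ of FVB₂ sending σ₁ ↦ A, ρ₁ ↦ B is irreducible if and only if yc ≠ 2(t±1). -/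
/-! `B` is an involution, so every eigenvalue `ν` of `B` satisfies `ν² = 1`. Since `y ≠ 0`, a
common eigenvector `v` has `v₀ ≠ 0`; the eigenvector equation of `A` then forces `2v₁ = cv₀`, and
the first row of `B v = ν v` becomes `yc = 2(t + ν)`. Conversely, `(2, c)` is a common
eigenvector as soon as `yc = 2(t ± 1)`. -/

open Matrix

theorem sq_eq_one_of_mulVec_eq_smul_of_mul_self_eq_one {n R : Type*} [Fintype n] [DecidableEq n]
    [CommRing R] [IsDomain R] {M : Matrix n n R} (hM : M * M = 1) {v : n → R} (hv : v ≠ 0)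
    {ν : R} (h : M *ᵥ v = ν • v) : ν ^ 2 = 1 := by
  refine smul_left_injective R hv ?_
  calc (ν ^ 2) • v = M *ᵥ (M *ᵥ v) := by rw [h, mulVec_smul, h, smul_smul, sq]
    _ = (1 : R) • v := by rw [mulVec_mulVec, hM, one_mulVec, one_smul]

theorem Matrix.mulVec_eq_smul_iff_fin_two {R : Type*} [CommRing R] {a b c d μ : R}
    {v : Fin 2 → R} :
    !![a, b; c, d] *ᵥ v = μ • v ↔ a * v 0 + b * v 1 = μ * v 0 ∧ c * v 0 + d * v 1 = μ * v 1 := by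
  rw [funext_iff, Fin.forall_fin_two]
  simp [vecHead, vecTail]

section

variable {K : Type*} [Field K] {c y t μ ν : K} {v : Fin 2 → K}

-- The images `λ₂(σ₁)` and `λ₂(ρ₁)` of the generators of `FVB₂`.
variable (c) in
def sigmaMat : Matrix (Fin 2) (Fin 2) K := !![1, 0; c, -1]

variable (y t) in
def rhoMat : Matrix (Fin 2) (Fin 2) K := !![-t, y; (1 - t ^ 2) / y, t]

theorem rhoMat_mul_self (hy : y ≠ 0) : rhoMat y t * rhoMat y t = 1 := by
  ext i j
  fin_cases i <;> fin_cases j <;> simp [rhoMat] <;> field_simp <;> ring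

theorem two_mul_snd_of_sigmaMat_mulVec (hv₀ : v 0 ≠ 0) (h : sigmaMat c *ᵥ v = μ • v) :
    2 * v 1 = c * v 0 := by
  obtain ⟨h₀, h₁⟩ := mulVec_eq_smul_iff_fin_two.mp h
  obtain rfl : μ = 1 := (mul_right_cancel₀ hv₀ (by linear_combination h₀)).symm
  linear_combination -h₁

theorem fst_ne_zero_of_rhoMat_mulVec (hy : y ≠ 0) (hv : v ≠ 0) (h : rhoMat y t *ᵥ v = ν • v) :
    v 0 ≠ 0 := by
  intro hv₀
  obtain ⟨h₀, -⟩ := mulVec_eq_smul_iff_fin_two.mp h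
  have hv₁ : v 1 = 0 := (mul_eq_zero.mp (by simpa [hv₀] using h₀)).resolve_left hy
  exact hv (funext fun i => by fin_cases i <;> assumption)

theorem mul_eq_of_rhoMat_mulVec (hv₀ : v 0 ≠ 0) (hv₁ : 2 * v 1 = c * v 0)
    (h : rhoMat y t *ᵥ v = ν • v) : y * c = 2 * (t + ν) := by
  obtain ⟨h₀, -⟩ := mulVec_eq_smul_iff_fin_two.mp h
  exact mul_right_cancel₀ hv₀ (by linear_combination 2 * h₀ - y * hv₁)

theorem sigmaMat_mulVec_two_c : sigmaMat c *ᵥ ![2, c] = ![2, c] := by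
  rw [sigmaMat, mulVec_fin_two]
  simp only [of_apply, cons_val', cons_val_zero, cons_val_one, empty_val', cons_val_fin_one]
  congr 2 <;> ring

theorem rhoMat_mulVec_two_c (hy : y ≠ 0) (hν : ν ^ 2 = 1) (h : y * c = 2 * (t + ν)) :
    rhoMat y t *ᵥ ![2, c] = ν • ![2, c] := by
  rw [rhoMat, mulVec_eq_smul_iff_fin_two]
  simp only [cons_val_zero, cons_val_one, cons_val_fin_one]
  constructor
  · linear_combination h
  · field_simp
    linear_combination (t - ν) * h - 2 * hν

end

/-- The matrices `A = [[1,0],[c,-1]]` and `B = [[-t,y],[(1-t²)/y,t]]` (with `y ≠ 0`)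
have a common eigenvector iff `yc = 2(t+1)` or `yc = 2(t-1)`; i.e. the
representation λ₂ of `FVB₂` is irreducible iff `yc ≠ 2(t±1)`. -/
theorem stmt3 (c y t : ℂ) (hy : y ≠ 0)
    (A B : Matrix (Fin 2) (Fin 2) ℂ)
    (hA : A = !![1, 0; c, -1])
    (hB : B = !![-t, y; (1 - t ^ 2) / y, t]) :
    (∃ v : Fin 2 → ℂ, v ≠ 0 ∧ (∃ μ : ℂ, A.mulVec v = μ • v) ∧
        (∃ ν : ℂ, B.mulVec v = ν • v)) ↔
      (y * c = 2 * (t + 1) ∨ y * c = 2 * (t - 1)) := by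
  obtain rfl : A = sigmaMat c := hA
  obtain rfl : B = rhoMat y t := hB
  constructor
  · rintro ⟨v, hv, ⟨μ, hσ⟩, ⟨ν, hρ⟩⟩
    have hv₀ := fst_ne_zero_of_rhoMat_mulVec hy hv hρ
    have hyc := mul_eq_of_rhoMat_mulVec hv₀ (two_mul_snd_of_sigmaMat_mulVec hv₀ hσ) hρ
    rcases sq_eq_one_iff.mp
      (sq_eq_one_of_mulVec_eq_smul_of_mul_self_eq_one (rhoMat_mul_self hy) hv hρ) with rfl | rfl
    · exact .inl hyc
    · exact .inr (by rw [hyc]; ring)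
  · intro h
    obtain ⟨ν, hν, hyc⟩ : ∃ ν : ℂ, ν ^ 2 = 1 ∧ y * c = 2 * (t + ν) := by
      rcases h with h | h
      exacts [⟨1, by norm_num, h⟩, ⟨-1, by norm_num, by rw [h]; ring⟩]
    refine ⟨![2, c], by simp, ⟨1, ?_⟩, ⟨ν, rhoMat_mulVec_two_c hy hν hyc⟩⟩
    rw [sigmaMat_mulVec_two_c, one_smul]
end

section
/- Let c, z ∈ ℂ and let λ₆ : FVB₂ → GL₂(ℂ) be the homomorphism defined by λ₆(σ₁) = [[1,0],[c,-1]] and λ₆(ρ₁) = [[1,0],[z,-1]]. Then λ₆ is injective (faithful) if and only if z ≠ c. -/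
/-!
`FVB₂` is generated by the involutions `σ₁, ρ₁`, so every element is `(σ₁ρ₁)ⁿ` or `(σ₁ρ₁)ⁿσ₁`.
Under `λ₆` the product `σ₁ρ₁` goes to the shear `[[1,0],[c-z,1]]`, whose `n`-th power is the shear
by `n(c-z)`; this is trivial only for `n = 0` once `z ≠ c`. Elements of the form `(σ₁ρ₁)ⁿσ₁` go to
matrices of determinant `-1`, so they are never trivial. Conversely, if `z = c` then `σ₁` and `ρ₁`
have the same image although `σ₁ ≠ ρ₁`, as the parity map `FVB₂ → ℤ/2` counting `σ₁` shows.
-/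

/-- The relations of the flat virtual braid group on two strands:
`σ₁² = 1` and `ρ₁² = 1`. -/
def FVB2rels : Set (FreeGroup Bool) :=
  {FreeGroup.of true * FreeGroup.of true, FreeGroup.of false * FreeGroup.of false}

/-- The flat virtual braid group `FVB₂ = ⟨σ₁, ρ₁ | σ₁² = ρ₁² = 1⟩`. -/
abbrev FVB2 : Type := PresentedGroup FVB2rels

/-- The generator `σ₁` of `FVB₂`. -/
def σ1 : FVB2 := PresentedGroup.of true

/-- The generator `ρ₁` of `FVB₂`. -/
def ρ1 : FVB2 := PresentedGroup.of false

section Involutions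

variable {G : Type*} [Group G] {s r : G}

theorem exists_zpow_of_mem_closure_pair (hs : s * s = 1) (hr : r * r = 1) {g : G}
    (hg : g ∈ Subgroup.closure {s, r}) : ∃ n : ℤ, g = (s * r) ^ n ∨ g = (s * r) ^ n * s := by
  have hs' : s⁻¹ = s := inv_eq_of_mul_eq_one_right hs
  have hr' : r⁻¹ = r := inv_eq_of_mul_eq_one_right hr
  have hrs : (s * r)⁻¹ * s = r := by
    rw [mul_inv_rev, hs', hr', mul_assoc, hs, mul_one]
  have mul_gen : ∀ x, (∃ n : ℤ, x = (s * r) ^ n ∨ x = (s * r) ^ n * s) → ∀ y ∈ ({s, r} : Set G),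
      ∃ n : ℤ, x * y = (s * r) ^ n ∨ x * y = (s * r) ^ n * s := by
    rintro x ⟨n, rfl | rfl⟩ y (rfl | rfl)
    · exact ⟨n, .inr rfl⟩
    · exact ⟨n - 1, .inr (by rw [zpow_sub_one, mul_assoc, hrs])⟩
    · exact ⟨n, .inl (by rw [mul_assoc, hs, mul_one])⟩
    · exact ⟨n + 1, .inl (by rw [zpow_add_one, mul_assoc])⟩
  induction hg using Subgroup.closure_induction_right with
  | one => exact ⟨0, .inl (zpow_zero _).symm⟩
  | mul_right x _ y hy ih => exact mul_gen x ih y hy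
  | mul_inv_cancel x _ y hy ih =>
    obtain rfl | rfl := hy
    · rw [hs']; exact mul_gen x ih _ (.inl rfl)
    · rw [hr']; exact mul_gen x ih _ (.inr rfl)

end Involutions

namespace FVB2

theorem σ1_mul_self : σ1 * σ1 = 1 :=
  PresentedGroup.one_of_mem (Set.mem_insert _ _)

theorem ρ1_mul_self : ρ1 * ρ1 = 1 :=
  PresentedGroup.one_of_mem (Set.mem_insert_of_mem _ rfl)

theorem closure_σ1_ρ1 : Subgroup.closure {σ1, ρ1} = ⊤ := by
  rw [← PresentedGroup.closure_range_of FVB2rels]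
  congr
  ext x
  simp [σ1, ρ1, or_comm]

theorem exists_zpow_eq (g : FVB2) : ∃ n : ℤ, g = (σ1 * ρ1) ^ n ∨ g = (σ1 * ρ1) ^ n * σ1 :=
  exists_zpow_of_mem_closure_pair σ1_mul_self ρ1_mul_self (closure_σ1_ρ1 ▸ Subgroup.mem_top g)

theorem σ1_ne_ρ1 : σ1 ≠ ρ1 := by
  let parity : Bool → Multiplicative (ZMod 2) := fun b => .ofAdd (if b then 1 else 0)
  have hrels : ∀ r ∈ FVB2rels, FreeGroup.lift parity r = 1 := by
    rintro r (rfl | rfl) <;> decide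
  intro h
  have := congrArg (PresentedGroup.toGroup hrels) h
  simp only [σ1, ρ1, PresentedGroup.toGroup.of, parity] at this
  exact absurd this (by decide)

end FVB2

namespace Matrix.GeneralLinearGroup

variable {R : Type*} [Ring R]

@[simps apply]
def lowerLeftHom : AddChar R (GL (Fin 2) R) where
  toFun x := ⟨!![1, 0; x, 1], !![1, 0; -x, 1], by simp [one_fin_two], by simp [one_fin_two]⟩
  map_zero_eq_one' := by simp [Units.ext_iff, one_fin_two]
  map_add_eq_mul' a b := by simp [Units.ext_iff, add_comm]

lemma lowerLeftHom_eq_one_iff {x : R} : lowerLeftHom x = 1 ↔ x = 0 := by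
  simp [Units.ext_iff, one_fin_two]

end Matrix.GeneralLinearGroup

/-- The representation λ₆ of `FVB₂` with `σ₁ ↦ [[1,0],[c,-1]]`, `ρ₁ ↦ [[1,0],[z,-1]]`
is faithful if and only if `z ≠ c`. -/
theorem stmt5 (c z : ℂ) (f : FVB2 →* GL (Fin 2) ℂ)
    (hσ : (f σ1 : Matrix (Fin 2) (Fin 2) ℂ) = !![1, 0; c, -1])
    (hρ : (f ρ1 : Matrix (Fin 2) (Fin 2) ℂ) = !![1, 0; z, -1]) :
    Function.Injective f ↔ z ≠ c := by
  have hσρ : f (σ1 * ρ1) = Matrix.GeneralLinearGroup.lowerLeftHom (c - z) := by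
    ext i j
    fin_cases i <;> fin_cases j <;> simp [hσ, hρ, Matrix.mul_apply, sub_eq_add_neg]
  constructor
  · rintro hinj rfl
    exact FVB2.σ1_ne_ρ1 (hinj (Units.ext (hσ.trans hρ.symm)))
  · intro hzc
    refine (injective_iff_map_eq_one f).mpr fun g hg => ?_
    obtain ⟨n, rfl | rfl⟩ := FVB2.exists_zpow_eq g
    · rw [map_zpow, hσρ, ← AddChar.map_zsmul_eq_zpow,
        Matrix.GeneralLinearGroup.lowerLeftHom_eq_one_iff, smul_eq_zero, sub_eq_zero] at hg
      rw [hg.resolve_right (Ne.symm hzc), zpow_zero]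
    · have hdet : (f ((σ1 * ρ1) ^ n * σ1) : Matrix (Fin 2) (Fin 2) ℂ).det = -1 := by
        rw [map_mul, map_zpow, hσρ, ← AddChar.map_zsmul_eq_zpow, Units.val_mul, Matrix.det_mul, hσ]
        simp [Matrix.det_fin_two]
      rw [hg, Units.val_one, Matrix.det_one] at hdet
      norm_num at hdet
end

section
/- Let b, d, y, t ∈ ℂ with b, y ≠ 0, and let λ₁ : FVB₂ → GL₂(ℂ) be the homomorphism with λ₁(σ₁) = [[-d, b],[(1-d²)/b, d]] and λ₁(ρ₁) = [[-t, y],[(1-t²)/y, t]]. If b = y and d = t, then λ₁(ρ₁σ₁) = I, so λ₁ is not injective. If b = -y and d = -t, then λ₁((ρ₁σ₁)²) = I, so λ₁ is not injective. -/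
/-- Map the generators to permutations of `ℤ`: `σ₁ ↦ (x ↦ -x)`, `ρ₁ ↦ (x ↦ 1 - x)`. -/
def gmap : Bool → Equiv.Perm ℤ :=
  fun b => if b then Equiv.neg ℤ else (Equiv.neg ℤ).trans (Equiv.addLeft 1)

lemma gmap_rels : ∀ r ∈ FVB2rels, FreeGroup.lift gmap r = 1 := by
  intro r hr
  rcases hr with h | h <;> subst h <;>
    · simp only [map_mul, FreeGroup.lift_apply_of, gmap]
      ext x
      simp [Equiv.Perm.mul_apply]

/-- The induced homomorphism `FVB₂ → Perm ℤ`. -/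
noncomputable def hperm : FVB2 →* Equiv.Perm ℤ := PresentedGroup.toGroup gmap_rels

lemma hperm_rs : hperm (ρ1 * σ1) = (Equiv.neg ℤ).trans (Equiv.addLeft 1) * Equiv.neg ℤ := by
  simp [hperm, ρ1, σ1, PresentedGroup.toGroup.of, gmap]

lemma rs_ne_one : ρ1 * σ1 ≠ 1 := by
  intro h
  have := congrArg hperm h
  rw [hperm_rs, map_one] at this
  have h0 := Equiv.ext_iff.mp this 0
  simp [Equiv.Perm.mul_apply] at h0

lemma rs_sq_ne_one : (ρ1 * σ1) ^ 2 ≠ 1 := by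
  intro h
  have := congrArg hperm h
  rw [map_pow, hperm_rs, map_one] at this
  have h0 := Equiv.ext_iff.mp this 0
  simp [pow_two, Equiv.Perm.mul_apply] at h0

/-- For the representation λ₁ of `FVB₂`: if `b = y` and `d = t` then
`λ₁(ρ₁σ₁) = 1`, and if `b = -y` and `d = -t` then `λ₁((ρ₁σ₁)²) = 1`;
in either case λ₁ is not injective. -/
theorem stmt7 (b d y t : ℂ) (hb : b ≠ 0) (hy : y ≠ 0)
    (f : FVB2 →* GL (Fin 2) ℂ)
    (hσ : (f σ1 : Matrix (Fin 2) (Fin 2) ℂ) = !![-d, b; (1 - d ^ 2) / b, d])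
    (hρ : (f ρ1 : Matrix (Fin 2) (Fin 2) ℂ) = !![-t, y; (1 - t ^ 2) / y, t]) :
    (b = y ∧ d = t → f (ρ1 * σ1) = 1 ∧ ¬Function.Injective f) ∧
    (b = -y ∧ d = -t → f ((ρ1 * σ1) ^ 2) = 1 ∧ ¬Function.Injective f) := by
  constructor
  · rintro ⟨rfl, rfl⟩
    have h1 : f (ρ1 * σ1) = 1 := by
      apply Units.ext
      rw [map_mul, Units.val_mul, hσ, hρ, Units.val_one, Matrix.one_fin_two]
      ext i j
      fin_cases i <;> fin_cases j
      all_goals try simp [Matrix.mul_apply, Fin.sum_univ_two]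
      all_goals try field_simp
      all_goals ring
    refine ⟨h1, fun hinj => rs_ne_one (hinj (by rw [h1, map_one]))⟩
  · rintro ⟨rfl, rfl⟩
    have h1 : f ((ρ1 * σ1) ^ 2) = 1 := by
      apply Units.ext
      rw [map_pow, map_mul, Units.val_pow_eq_pow_val, Units.val_mul, hσ, hρ,
        Units.val_one, Matrix.one_fin_two, pow_two]
      ext i j
      fin_cases i <;> fin_cases j
      all_goals try simp [Matrix.mul_apply, Fin.sum_univ_two]
      all_goals try field_simp
      all_goals ring
    refine ⟨h1, fun hinj => rs_sq_ne_one (hinj (by rw [h1, map_one]))⟩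
end

section
/- Let c, y, t ∈ ℂ with y ≠ 0 and t = cy/2, and set A = [[1,0],[c,-1]] and B = [[-t, y],[(1-t²)/y, t]]. Then (B·A)⁴ = I, so the homomorphism λ₂ : FVB₂ → GL₂(ℂ) with λ₂(σ₁)=A, λ₂(ρ₁)=B is not injective. -/
/-- A homomorphism from `FVB₂` to the dihedral group of order 10. -/
noncomputable def toD5 : FVB2 →* DihedralGroup 5 :=
  PresentedGroup.toGroup (f := fun b => if b then DihedralGroup.sr 0 else DihedralGroup.sr 1)
    (by
      intro r hr
      rcases hr with h | h <;> subst h <;> simp <;> decide)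

lemma toD5_ne : (ρ1 * σ1) ^ 4 ≠ 1 := by
  intro h
  have := congrArg toD5 h
  rw [map_pow, map_mul, map_one] at this
  have hσ : toD5 σ1 = DihedralGroup.sr 0 := PresentedGroup.toGroup.of _
  have hρ : toD5 ρ1 = DihedralGroup.sr 1 := PresentedGroup.toGroup.of _
  rw [hσ, hρ] at this
  revert this
  decide

/-- If `t = cy/2` (`y ≠ 0`) then `(B·A)⁴ = 1` for `A = [[1,0],[c,-1]]`,
`B = [[-t,y],[(1-t²)/y,t]]`, and hence the representation λ₂ of `FVB₂`
with these images is not injective. -/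
theorem stmt8 (c y t : ℂ) (hy : y ≠ 0) (ht : t = c * y / 2)
    (A B : Matrix (Fin 2) (Fin 2) ℂ)
    (hA : A = !![1, 0; c, -1])
    (hB : B = !![-t, y; (1 - t ^ 2) / y, t]) :
    (B * A) ^ 4 = 1 ∧
      ∀ f : FVB2 →* GL (Fin 2) ℂ,
        (f σ1 : Matrix (Fin 2) (Fin 2) ℂ) = A →
        (f ρ1 : Matrix (Fin 2) (Fin 2) ℂ) = B →
        ¬Function.Injective f := by
  have hsq : (B * A) * (B * A) = -1 := by
    subst hA hB ht
    ext i j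
    fin_cases i <;> fin_cases j <;>
      simp [Matrix.mul_apply, Fin.sum_univ_two] <;>
      field_simp <;> ring
  have h4 : (B * A) ^ 4 = 1 := by
    rw [show (4:ℕ) = 2*2 from rfl, pow_mul, pow_two (B * A), hsq]
    simp
  refine ⟨h4, ?_⟩
  intro f hfσ hfρ hinj
  have key : f ((ρ1 * σ1) ^ 4) = 1 := by
    apply Units.ext
    push_cast [map_pow, map_mul]
    rw [hfρ, hfσ, h4]
  exact toD5_ne (hinj (key.trans (map_one f).symm))
end

section
/- Let b, d, z ∈ ℂ with b ≠ 0 and d = bz/2, and set A = [[-d, b],[(1-d²)/b, d]] and B = [[1,0],[z,-1]]. Then (A·B)⁴ = I, so the homomorphism λ₄ : FVB₂ → GL₂(ℂ) with λ₄(σ₁)=A, λ₄(ρ₁)=B is not injective. -/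
/-- Auxiliary: unit matrix of order 2 over ℚ. -/
lemma MuSq : (!![1, 1; 0, -1] : Matrix (Fin 2) (Fin 2) ℚ) * !![1, 1; 0, -1] = 1 := by
  ext i j; fin_cases i <;> fin_cases j <;> norm_num [Matrix.mul_apply, Fin.sum_univ_two]

lemma NuSq : (!![1, 0; 0, -1] : Matrix (Fin 2) (Fin 2) ℚ) * !![1, 0; 0, -1] = 1 := by
  ext i j; fin_cases i <;> fin_cases j <;> norm_num [Matrix.mul_apply, Fin.sum_univ_two]

def Mu : (Matrix (Fin 2) (Fin 2) ℚ)ˣ := ⟨!![1, 1; 0, -1], !![1, 1; 0, -1], MuSq, MuSq⟩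

def Nu : (Matrix (Fin 2) (Fin 2) ℚ)ˣ := ⟨!![1, 0; 0, -1], !![1, 0; 0, -1], NuSq, NuSq⟩

def testFun : Bool → (Matrix (Fin 2) (Fin 2) ℚ)ˣ := fun x => if x then Mu else Nu

lemma testRel : ∀ r ∈ FVB2rels, FreeGroup.lift testFun r = 1 := by
  intro r hr
  rcases hr with h | h <;> subst h <;>
    simp only [map_mul, FreeGroup.lift_apply_of, testFun] <;>
    exact Units.ext (by simp [Mu, Nu, MuSq, NuSq, ← Matrix.one_fin_two])

noncomputable def g : FVB2 →* (Matrix (Fin 2) (Fin 2) ℚ)ˣ :=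
  PresentedGroup.toGroup testRel

lemma key : (σ1 * ρ1) ^ 4 ≠ 1 := by
  intro h
  have := congrArg g h
  rw [map_pow, map_mul, map_one] at this
  have h1 : g σ1 = Mu := PresentedGroup.toGroup.of testRel
  have h2 : g ρ1 = Nu := PresentedGroup.toGroup.of testRel
  rw [h1, h2] at this
  have : ((Mu * Nu) ^ 4 : (Matrix (Fin 2) (Fin 2) ℚ)ˣ).val = 1 := by rw [this]; rfl
  simp only [Units.val_pow_eq_pow_val, Units.val_mul, Mu, Nu] at this
  have := congrFun (congrFun this 0) 1
  norm_num [pow_succ, Matrix.mul_apply, Fin.sum_univ_two] at this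

/-- If `d = bz/2` (`b ≠ 0`) then `(A·B)⁴ = 1` for `A = [[-d,b],[(1-d²)/b,d]]`,
`B = [[1,0],[z,-1]]`, and hence the representation λ₄ of `FVB₂`
with these images is not injective. -/
theorem stmt9 (b d z : ℂ) (hb : b ≠ 0) (hd : d = b * z / 2)
    (A B : Matrix (Fin 2) (Fin 2) ℂ)
    (hA : A = !![-d, b; (1 - d ^ 2) / b, d])
    (hB : B = !![1, 0; z, -1]) :
    (A * B) ^ 4 = 1 ∧
      ∀ f : FVB2 →* GL (Fin 2) ℂ,
        (f σ1 : Matrix (Fin 2) (Fin 2) ℂ) = A →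
        (f ρ1 : Matrix (Fin 2) (Fin 2) ℂ) = B →
        ¬Function.Injective f := by
  have h2 : (A * B) * (A * B) = -1 := by
    subst hA hB hd
    ext i j
    fin_cases i <;> fin_cases j <;>
      · simp [Matrix.mul_apply, Fin.sum_univ_two]
        field_simp
        ring
  have h4 : (A * B) ^ 4 = 1 := by
    rw [show (4 : ℕ) = 2 * 2 from rfl, pow_mul, pow_two, pow_two, h2]
    simp
  refine ⟨h4, ?_⟩
  intro f hfA hfB hinj
  apply key
  apply hinj
  rw [map_one]
  apply Units.ext
  have : ((f ((σ1 * ρ1) ^ 4) : GL (Fin 2) ℂ) : Matrix (Fin 2) (Fin 2) ℂ)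
      = ((f σ1 : Matrix (Fin 2) (Fin 2) ℂ) * (f ρ1 : Matrix (Fin 2) (Fin 2) ℂ)) ^ 4 := by
    rw [map_pow, map_mul]
    simp [Units.val_pow_eq_pow_val, Units.val_mul]
  rw [this, hfA, hfB, h4]
  rfl
end
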